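/- arXiv:2511.23257 — 2 statements merged into one kernel-verified Lean document; each statement's English description precedes it below -/
import Mathlib

section
/- Let N ∈ ℕ and let Q = (q_{i,j}), i, j ∈ {−N, …, N}, be a real symmetric positive semidefinite matrix of the form q_{i,i} = a_i, q_{i,j} = (b_i − b_j)/(i − j) for i ≠ j, with a_{−i} = a_i and b_{−i} = −b_i. Assume the kernel of Q is one-dimensional and even (every ξ ∈ ker Q satisfies ξ_{−j} = ξ_j). Let ξ ∈ ker Q be nonzero and define ξ(x) := Σ_{k=−N}^{N} ξ_k exp(2πikx) for x ∈ [0, 1] and ξ(x) = 0 for x ∉ [0, 1]. Then the Fourier transform ξ̂(z) = ∫_0^1 ξ(x) e^{−izx} dx is an entire function, and every z ∈ ℂ with ξ̂(z) = 0 is real. -/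
/-!
For every `c`, `∫₀¹ e^{cx} dx = φ(c)` with `φ = dslope exp 0`, i.e. `φ(c) = (e^c - 1)/c`, an entire
function; so `ξ̂(z) = ∑ ξ_k φ(2πik - iz)` is entire, and for `Im z ≠ 0` it equals
`i (e^{-iz} - 1) ∑ ξ_k / (z - 2πk)` with `e^{-iz} ≠ 1`.

The shape of `Q` is the displacement equation `(s_j - s_k) q_{jk} = β_j - β_k` with `s_k = 2πk`,
`β_k = 2πb_k`. If `Im z ≠ 0` and `g_k = ξ_k / (z - s_k)` has `∑ g_k = 0`, multiply the equation
by `conj g_j g_k` and sum: the `β`-terms vanish because `∑ g_k = 0`, and writing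
`(z - s_k) g_k = ξ_k ∈ ker Q` turns the rest into `(z - z̄) g* Q g = 0`.
So `g* Q g = 0`, the real and imaginary parts of `g` lie in `ker Q = ℝ ξ`, and `g = c ξ`. Then
`z - s_k = 1/c` on the support of `ξ`, which is therefore a single point `k₀`, and
`∑ g_k = g_{k₀} ≠ 0`.
-/

/-- The index set `{-N, …, N}` as a subtype of `ℤ`. -/
abbrev Idx (N : ℕ) := {i : ℤ // i ∈ Finset.Icc (-(N : ℤ)) N}

/-- Negation on the index set `{-N, …, N}`. -/
def negIdx {N : ℕ} (i : Idx N) : Idx N :=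
  ⟨-i.1, by
    have := Finset.mem_Icc.mp i.2
    exact Finset.mem_Icc.mpr ⟨by omega, by omega⟩⟩

open Complex ComplexConjugate Matrix MeasureTheory Finset
open scoped Real

lemma differentiable_dslope_exp : Differentiable ℂ (dslope exp 0) :=
  differentiableOn_univ.mp <|
    (differentiableOn_dslope Filter.univ_mem).mpr differentiable_exp.differentiableOn

lemma dslope_exp_of_ne {c : ℂ} (hc : c ≠ 0) : dslope exp 0 c = (exp c - 1) / c := by
  rw [dslope_of_ne _ hc, slope_def_field, exp_zero, sub_zero]

lemma integral_Icc_exp_mul (c : ℂ) :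
    ∫ x in Set.Icc (0 : ℝ) 1, exp (c * x) = dslope exp 0 c := by
  rw [integral_Icc_eq_integral_Ioc, ← intervalIntegral.integral_of_le zero_le_one]
  rcases eq_or_ne c 0 with rfl | hc
  · simp [dslope_same]
  · rw [integral_exp_mul_complex hc, dslope_exp_of_ne hc]
    simp

lemma integral_Icc_sum_mul_exp {ι : Type*} [Fintype ι] (c ω : ι → ℂ) (μ : ℂ) :
    ∫ x in Set.Icc (0 : ℝ) 1, (∑ k, c k * exp (ω k * x)) * exp (μ * x) =
      ∑ k, c k * dslope exp 0 (ω k + μ) := by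
  simp_rw [Finset.sum_mul, mul_assoc, ← exp_add, ← add_mul]
  rw [integral_finsetSum _ fun k _ => (by fun_prop : Continuous _).integrableOn_Icc]
  simp_rw [integral_const_mul, integral_Icc_exp_mul]

lemma dslope_exp_two_pi_I_int_mul_sub (n : ℤ) {z : ℂ} (hz : z.im ≠ 0) :
    dslope exp 0 (2 * π * I * n + -I * z) = I * (exp (-I * z) - 1) / (z - 2 * π * n) := by
  have hw : z - 2 * π * n ≠ 0 := fun h => hz (by simpa using congrArg im h)
  have hc : 2 * π * I * n + -I * z = -I * (z - 2 * π * n) := by ring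
  have he : exp (-I * (z - 2 * π * n)) = exp (-I * z) := by
    rw [show -I * (z - 2 * π * n) = n * (2 * π * I) + -I * z by ring, exp_add,
      exp_int_mul_two_pi_mul_I, one_mul]
  rw [hc, dslope_exp_of_ne (mul_ne_zero (neg_ne_zero.mpr I_ne_zero) hw), he, mul_comm I,
    mul_div_assoc, div_mul_eq_div_div, div_neg, div_I, neg_neg, mul_div_assoc]

lemma sum_mul_dslope_exp_eq {ι : Type*} [Fintype ι] (c : ι → ℂ) (n : ι → ℤ) {z : ℂ}
    (hz : z.im ≠ 0) :
    ∑ k, c k * dslope exp 0 (2 * π * I * n k + -I * z) =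
      I * (exp (-I * z) - 1) * ∑ k, c k / (z - 2 * π * n k) := by
  simp_rw [dslope_exp_two_pi_I_int_mul_sub _ hz, mul_sum]
  exact sum_congr rfl fun k _ => by ring

lemma exp_neg_I_mul_ne_one {z : ℂ} (hz : z.im ≠ 0) : exp (-I * z) ≠ 1 := fun h =>
  hz (by simpa [norm_exp] using congrArg norm h)

lemma Matrix.exists_eq_smul_of_finrank_ker_eq_one {K m n : Type*} [Field K] [Fintype n]
    {M : Matrix m n K} (hker : Module.finrank K (LinearMap.ker M.mulVecLin) = 1)
    {ξ v : n → K} (hξ : ξ ≠ 0) (hMξ : M *ᵥ ξ = 0) (hMv : M *ᵥ v = 0) : ∃ c : K, v = c • ξ := by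
  have hspan : K ∙ ξ = LinearMap.ker M.mulVecLin :=
    Submodule.eq_of_le_of_finrank_le ((Submodule.span_singleton_le_iff_mem _ _).mpr hMξ)
      (by rw [hker, finrank_span_singleton hξ])
  obtain ⟨c, hc⟩ := Submodule.mem_span_singleton.mp (hspan ▸ hMv : v ∈ K ∙ ξ)
  exact ⟨c, hc.symm⟩

lemma sub_mul_eq_sub_of_apply_eq_div {ι : Type*} {Q : Matrix ι ι ℝ} {s b : ι → ℝ}
    (hs : Function.Injective s)
    (hQ : ∀ i j, i ≠ j → Q i j = (b i - b j) / (s i - s j)) (c : ℝ) (i j : ι) :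
    (c * s i - c * s j) * Q i j = c * b i - c * b j := by
  rcases eq_or_ne i j with rfl | hij
  · ring
  · rw [hQ i j hij]
    field_simp [sub_ne_zero.mpr (hs.ne hij)]

section DisplacementStructure

variable {ι : Type*} [Fintype ι] {Q : Matrix ι ι ℝ} {s β ξ : ι → ℝ}

def hermForm (Q : Matrix ι ι ℝ) (g : ι → ℂ) : ℂ :=
  ∑ j, ∑ k, (Q j k : ℂ) * (conj (g j) * g k)

lemma re_hermForm (Q : Matrix ι ι ℝ) (g : ι → ℂ) :
    (hermForm Q g).re = (re ∘ g) ⬝ᵥ Q *ᵥ (re ∘ g) + (im ∘ g) ⬝ᵥ Q *ᵥ (im ∘ g) := by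
  simp only [hermForm, re_sum, ofReal_re, ofReal_im, zero_mul, sub_zero, mul_re, conj_re, conj_im,
    dotProduct, mulVec, Function.comp_apply, mul_sum, ← sum_add_distrib]
  exact sum_congr rfl fun j _ => sum_congr rfl fun k _ => by ring

lemma Matrix.PosSemidef.mulVec_eq_zero_of_dotProduct_add_eq_zero (hpsd : Q.PosSemidef)
    {p q : ι → ℝ} (h : p ⬝ᵥ Q *ᵥ p + q ⬝ᵥ Q *ᵥ q = 0) : Q *ᵥ p = 0 ∧ Q *ᵥ q = 0 := by
  have hp := hpsd.dotProduct_mulVec_nonneg p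
  have hq := hpsd.dotProduct_mulVec_nonneg q
  simp only [star_trivial] at hp hq
  exact ⟨(hpsd.dotProduct_mulVec_zero_iff p).mp (by simp only [star_trivial]; linarith),
    (hpsd.dotProduct_mulVec_zero_iff q).mp (by simp only [star_trivial]; linarith)⟩

lemma hermForm_eq_zero_of_displacement (hQ : ∀ j k, (s j - s k) * Q j k = β j - β k)
    (hsymm : ∀ j k, Q j k = Q k j) (hQξ : Q *ᵥ ξ = 0) {z : ℂ} (hz : z.im ≠ 0) {g : ι → ℂ}
    (hg : ∀ k, (z - s k) * g k = ξ k) (hsum : ∑ k, g k = 0) :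
    hermForm Q g = 0 := by
  have hrow : ∀ j, ∑ k, (Q j k : ℂ) * ξ k = 0 := fun j => by exact_mod_cast congrFun hQξ j
  have hterm : ∀ j k, (z - conj z) * ((Q j k : ℂ) * (conj (g j) * g k)) =
      conj (g j) * (Q j k * ξ k) - g k * (Q k j * ξ j) -
        (β j * conj (g j) * g k - conj (g j) * (β k * g k)) := by
    intro j k
    have hj : (conj z - s j) * conj (g j) = ξ j := by simpa using congrArg conj (hg j)
    have hQc : ((s j : ℂ) - s k) * Q j k = β j - β k := by exact_mod_cast hQ j k
    rw [← hsymm j k]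
    linear_combination ((Q j k : ℂ) * conj (g j)) * hg k - ((Q j k : ℂ) * g k) * hj
      - (conj (g j) * g k) * hQc
  have hz' : z - conj z ≠ 0 := by
    rw [sub_conj]; exact mul_ne_zero (by exact_mod_cast mul_ne_zero two_ne_zero hz) I_ne_zero
  refine (mul_eq_zero.mp ?_).resolve_left hz'
  rw [hermForm]
  have hcol : ∑ j, ∑ k, g k * (Q k j * ξ j) = 0 := by
    rw [sum_comm]; simp_rw [← mul_sum, hrow, mul_zero, sum_const_zero]
  simp_rw [mul_sum, hterm, sum_sub_distrib, ← mul_sum, hrow]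
  rw [hcol, hsum]
  simp [← sum_mul, ← map_sum, hsum]

lemma sum_div_sub_ne_zero (hQ : ∀ j k, (s j - s k) * Q j k = β j - β k) (hpsd : Q.PosSemidef)
    (hker : Module.finrank ℝ (LinearMap.ker Q.mulVecLin) = 1) (hξ : ξ ≠ 0) (hQξ : Q *ᵥ ξ = 0)
    (hs : Function.Injective s) {z : ℂ} (hz : z.im ≠ 0) :
    ∑ k, (ξ k : ℂ) / (z - s k) ≠ 0 := by
  intro hsum
  have hzs : ∀ k, z - s k ≠ 0 := fun k h => hz (by simpa using congrArg im h)
  set g : ι → ℂ := fun k => ξ k / (z - s k)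
  have hg : ∀ k, (z - s k) * g k = ξ k := fun k => mul_div_cancel₀ _ (hzs k)
  have hsymm : ∀ j k, Q j k = Q k j := fun j k => by simpa using hpsd.1.apply k j
  have hH := hermForm_eq_zero_of_displacement hQ hsymm hQξ hz hg hsum
  obtain ⟨hre, him⟩ := hpsd.mulVec_eq_zero_of_dotProduct_add_eq_zero
    (by rw [← re_hermForm, hH, zero_re])
  obtain ⟨a, ha⟩ := exists_eq_smul_of_finrank_ker_eq_one hker hξ hQξ hre
  obtain ⟨b, hb⟩ := exists_eq_smul_of_finrank_ker_eq_one hker hξ hQξ him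
  have hgξ : ∀ k, g k = (a + b * I) * ξ k := fun k =>
    Complex.ext (by simpa using congrFun ha k) (by simpa using congrFun hb k)
  have hnode : ∀ k, ξ k ≠ 0 → (s k : ℂ) = z - (a + b * I)⁻¹ := fun k hk => by
    have : (z - s k) * (a + b * I) = 1 := by
      refine mul_right_cancel₀ (ofReal_ne_zero.mpr hk) ?_
      rw [mul_assoc, ← hgξ, hg, one_mul]
    rw [← eq_inv_of_mul_eq_one_left this, sub_sub_cancel]
  obtain ⟨k₀, hk₀⟩ := Function.ne_iff.mp hξ
  have hsupp : ∀ k, k ≠ k₀ → g k = 0 := fun k hk => by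
    by_contra hgk
    have hξk : ξ k ≠ 0 := fun h => hgk (by simp [g, h])
    exact hk (hs (by exact_mod_cast (hnode k hξk).trans (hnode k₀ hk₀).symm))
  rw [sum_eq_single k₀ (fun k _ => hsupp k) (by simp)] at hsum
  exact div_ne_zero (ofReal_ne_zero.mpr hk₀) (hzs k₀) hsum

end DisplacementStructure

theorem stmt15_general (N : ℕ) (b : Idx N → ℝ)
    (Q : Matrix (Idx N) (Idx N) ℝ)
    (hQoff : ∀ i j, i ≠ j → Q i j = (b i - b j) / ((i.1 - j.1 : ℤ) : ℝ))
    (hpsd : Q.PosSemidef)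
    (hker1 : Module.finrank ℝ (LinearMap.ker Q.mulVecLin) = 1)
    (ξ : Idx N → ℝ) (hξ : ξ ≠ 0) (hkerξ : Q.mulVec ξ = 0)
    (F : ℂ → ℂ)
    (hF : F = fun z => ∫ x in Set.Icc (0 : ℝ) 1,
        (∑ k : Idx N, (ξ k : ℂ) * Complex.exp (2 * Real.pi * Complex.I * (k.1 : ℤ) * x)) *
          Complex.exp (-Complex.I * z * x)) :
    Differentiable ℂ F ∧ ∀ z : ℂ, F z = 0 → z.im = 0 := by
  have hF' : F = fun z => ∑ k : Idx N, (ξ k : ℂ) * dslope exp 0 (2 * π * I * k.1 + -I * z) := by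
    rw [hF]; funext z; exact integral_Icc_sum_mul_exp _ _ _
  refine ⟨hF' ▸ Differentiable.fun_sum fun k _ => (differentiable_const _).mul
    (differentiable_dslope_exp.comp (by fun_prop)), fun z hz0 => ?_⟩
  by_contra hz
  have hinj : Function.Injective fun k : Idx N => (k.1 : ℝ) := fun j k h =>
    Subtype.ext (Int.cast_injective h)
  have hQ : ∀ i j, i ≠ j → Q i j = (b i - b j) / ((i.1 : ℝ) - j.1) := fun i j hij => by
    rw [hQoff i j hij]; push_cast; rfl
  have hdisp := sub_mul_eq_sub_of_apply_eq_div hinj hQ (2 * π)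
  refine sum_div_sub_ne_zero hdisp hpsd hker1 hξ hkerξ
    ((mul_right_injective₀ (by positivity)).comp hinj) hz ?_
  simp only [hF'] at hz0
  rw [sum_mul_dslope_exp_eq _ _ hz] at hz0
  push_cast
  exact (mul_eq_zero.mp hz0).resolve_left
    (mul_ne_zero I_ne_zero (sub_ne_zero.mpr (exp_neg_I_mul_ne_one hz)))

/-- Let `Q` be a real symmetric positive semidefinite matrix of the standard
form with one-dimensional, even kernel, and let `ξ ∈ ker Q` be nonzero. Set
`ξ(x) = ∑_k ξ_k exp(2πikx)` on `[0, 1]`, extended by zero. Then the Fourier transform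
`ξ̂(z) = ∫_0^1 ξ(x) e^(-izx) dx` is entire and all its zeros are real. -/
theorem stmt15 (N : ℕ) (a b : Idx N → ℝ)
    (ha : ∀ i, a (negIdx i) = a i) (hb : ∀ i, b (negIdx i) = -b i)
    (Q : Matrix (Idx N) (Idx N) ℝ)
    (hQdiag : ∀ i, Q i i = a i)
    (hQoff : ∀ i j, i ≠ j → Q i j = (b i - b j) / ((i.1 - j.1 : ℤ) : ℝ))
    (hpsd : Q.PosSemidef)
    (hker1 : Module.finrank ℝ (LinearMap.ker Q.mulVecLin) = 1)
    (hkereven : ∀ v : Idx N → ℝ, Q.mulVec v = 0 → ∀ i, v (negIdx i) = v i)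
    (ξ : Idx N → ℝ) (hξ : ξ ≠ 0) (hkerξ : Q.mulVec ξ = 0)
    (F : ℂ → ℂ)
    (hF : F = fun z => ∫ x in Set.Icc (0 : ℝ) 1,
        (∑ k : Idx N, (ξ k : ℂ) * Complex.exp (2 * Real.pi * Complex.I * (k.1 : ℤ) * x)) *
          Complex.exp (-Complex.I * z * x)) :
    Differentiable ℂ F ∧ ∀ z : ℂ, F z = 0 → z.im = 0 :=
  stmt15_general N b Q hQoff hpsd hker1 ξ hξ hkerξ F hF
end

section
/- Let N ∈ ℕ, let λ_{−N}, …, λ_N be distinct real numbers with λ_{−j} = −λ_j, and let D be the diagonal matrix with D e_j = λ_j e_j, indexed by j ∈ {−N, …, N}. Let Q = (q_{i,j}) be the real matrix with q_{i,i} = a_i, q_{i,j} = (b_i − b_j)/(λ_i − λ_j) for i ≠ j, where a_{−i} = a_i and b_{−i} = −b_i. Assume Q is positive semidefinite, Qξ = 0, ξ_{−j} = ξ_j for all j, and ⟨ξ, η⟩ = 1 where η = Σ_j e_j. Let R be the matrix with entries R_{i,j} = −(Dξ)_i for all i, j (i.e. R = −|Dξ⟩⟨η|). Then Σ_j R_{j,j}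 b_j = ⟨Dξ, Dξ⟩_Q and Σ_{i,j} R_{i,j} R_{j,i} q_{i,j} = ⟨Dξ, Dξ⟩_Q, where ⟨u, v⟩_Q := ⟨Qu, v⟩ = Σ_{i,j} q_{i,j} u_j v_i. -/
/-!
Write `v = Dξ`. The defining formula of `Q` says `q_{ij} (λ_j - λ_i) = b_j - b_i` for all `i, j`,
so `(Qv)_i = λ_i (Qξ)_i + ⟨b, ξ⟩ - b_i ⟨ξ, η⟩ = -b_i`: here `Qξ = 0`, `⟨ξ, η⟩ = 1`, and
`⟨b, ξ⟩ = 0` because `b` is odd and `ξ` is even. Hence `⟨v, v⟩_Q = -⟨b, v⟩ = ∑_j R_{jj} b_j`,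
while `∑_{i,j} R_{ij} R_{ji} q_{ij} = ∑_{i,j} q_{ij} v_i v_j` is `⟨v, v⟩_Q` for any rank-one
`R = -|v⟩⟨η|`.
-/

open Matrix Finset

theorem negIdx_involutive (N : ℕ) : Function.Involutive (negIdx (N := N)) := fun i => by
  simp [negIdx]

theorem dotProduct_eq_zero_of_odd_of_even {ι R : Type*} [Fintype ι] [CommRing R]
    [IsAddTorsionFree R] {σ : ι → ι} (hσ : Function.Involutive σ) {f g : ι → R}
    (hf : ∀ i, f (σ i) = -f i) (hg : ∀ i, g (σ i) = g i) : f ⬝ᵥ g = 0 := by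
  refine self_eq_neg.mp ?_
  calc f ⬝ᵥ g = ∑ i, f (σ i) * g (σ i) := (Equiv.sum_comp (hσ.toPerm σ) fun i => f i * g i).symm
    _ = -(f ⬝ᵥ g) := by simp [dotProduct, hf, hg]

theorem mul_sub_eq_sub_of_offDiag {ι K : Type*} [Field K] {Q : Matrix ι ι K} {lam b : ι → K}
    (hlam : Function.Injective lam)
    (hQ : ∀ i j, i ≠ j → Q i j = (b i - b j) / (lam i - lam j)) (i j : ι) :
    Q i j * (lam j - lam i) = b j - b i := by
  obtain rfl | hij := eq_or_ne i j
  · simp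
  have hlam_ne : lam i - lam j ≠ 0 := sub_ne_zero.mpr (hlam.ne hij)
  rw [hQ i j hij]
  field_simp
  ring

theorem mulVec_diagonal_mulVec_apply {ι R : Type*} [Fintype ι] [DecidableEq ι] [CommRing R]
    {Q : Matrix ι ι R} {lam b : ι → R} (hQ : ∀ i j, Q i j * (lam j - lam i) = b j - b i)
    (ξ : ι → R) (i : ι) :
    (Q *ᵥ (diagonal lam *ᵥ ξ)) i = lam i * (Q *ᵥ ξ) i + (b ⬝ᵥ ξ - b i * ∑ j, ξ j) := by
  rw [funext (mulVec_diagonal lam ξ)]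
  simp only [mulVec, dotProduct]
  calc ∑ j, Q i j * (lam j * ξ j) = ∑ j, (lam i * (Q i j * ξ j) + (b j * ξ j - b i * ξ j)) :=
        sum_congr rfl fun j _ => by linear_combination ξ j * hQ i j
    _ = _ := by simp only [sum_add_distrib, sum_sub_distrib, mul_sum]

theorem sum_sum_mul_mul_eq_mulVec_dotProduct {ι α : Type*} [Fintype ι] [CommRing α]
    (Q R : Matrix ι ι α) (v : ι → α) (hR : ∀ i j, R i j = -v i) :
    ∑ i, ∑ j, R i j * R j i * Q i j = (Q *ᵥ v) ⬝ᵥ v := by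
  simp only [hR, dotProduct, mulVec, sum_mul]
  exact sum_congr rfl fun i _ => sum_congr rfl fun j _ => by ring

theorem stmt18_general (N : ℕ) (lam : Idx N → ℝ)
    (hlaminj : Function.Injective lam)
    (D : Matrix (Idx N) (Idx N) ℝ) (hD : D = Matrix.diagonal lam)
    (b : Idx N → ℝ) (hb : ∀ i, b (negIdx i) = -b i)
    (Q : Matrix (Idx N) (Idx N) ℝ)
    (hQoff : ∀ i j, i ≠ j → Q i j = (b i - b j) / (lam i - lam j))
    (ξ : Idx N → ℝ) (hker : Q.mulVec ξ = 0)
    (heven : ∀ i, ξ (negIdx i) = ξ i)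
    (hnorm : ∑ i : Idx N, ξ i = 1)
    (R : Matrix (Idx N) (Idx N) ℝ)
    (hR : ∀ i j, R i j = -(D.mulVec ξ) i) :
    (∑ j : Idx N, R j j * b j) =
        dotProduct (Q.mulVec (D.mulVec ξ)) (D.mulVec ξ) ∧
      (∑ i : Idx N, ∑ j : Idx N, R i j * R j i * Q i j) =
        dotProduct (Q.mulVec (D.mulVec ξ)) (D.mulVec ξ) := by
  have hbξ : b ⬝ᵥ ξ = 0 := dotProduct_eq_zero_of_odd_of_even (negIdx_involutive N) hb heven
  have hQv : Q *ᵥ (D *ᵥ ξ) = -b := funext fun i => by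
    rw [hD, mulVec_diagonal_mulVec_apply (mul_sub_eq_sub_of_offDiag hlaminj hQoff), hker, hnorm,
      hbξ]
    simp
  refine ⟨?_, sum_sum_mul_mul_eq_mulVec_dotProduct Q R _ hR⟩
  rw [hQv]
  exact sum_congr rfl fun j _ => by rw [hR, Pi.neg_apply]; ring

/-- With distinct `λ_j` (`λ_{-j} = -λ_j`), `D = diag(λ_j)`, `Q` of the
standard form, `Q` PSD, `Qξ = 0`, `ξ` even, `⟨ξ, η⟩ = 1`, and `R = -|Dξ⟩⟨η|`
(`R_{i,j} = -(Dξ)_i`), one has `∑_j R_{j,j} b_j = ⟨Dξ, Dξ⟩_Q` and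
`∑_{i,j} R_{i,j} R_{j,i} q_{i,j} = ⟨Dξ, Dξ⟩_Q`, with `⟨u, v⟩_Q = ⟨Qu, v⟩`. -/
theorem stmt18 (N : ℕ) (lam : Idx N → ℝ)
    (hlaminj : Function.Injective lam)
    (hlamodd : ∀ j, lam (negIdx j) = -lam j)
    (D : Matrix (Idx N) (Idx N) ℝ) (hD : D = Matrix.diagonal lam)
    (a b : Idx N → ℝ) (ha : ∀ i, a (negIdx i) = a i) (hb : ∀ i, b (negIdx i) = -b i)
    (Q : Matrix (Idx N) (Idx N) ℝ)
    (hQdiag : ∀ i, Q i i = a i)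
    (hQoff : ∀ i j, i ≠ j → Q i j = (b i - b j) / (lam i - lam j))
    (hpsd : Q.PosSemidef)
    (ξ : Idx N → ℝ) (hker : Q.mulVec ξ = 0)
    (heven : ∀ i, ξ (negIdx i) = ξ i)
    (hnorm : ∑ i : Idx N, ξ i = 1)
    (R : Matrix (Idx N) (Idx N) ℝ)
    (hR : ∀ i j, R i j = -(D.mulVec ξ) i) :
    (∑ j : Idx N, R j j * b j) =
        dotProduct (Q.mulVec (D.mulVec ξ)) (D.mulVec ξ) ∧
      (∑ i : Idx N, ∑ j : Idx N, R i j * R j i * Q i j) =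
        dotProduct (Q.mulVec (D.mulVec ξ)) (D.mulVec ξ) :=
  stmt18_general N lam hlaminj D hD b hb Q hQoff ξ hker heven hnorm R hR
end
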